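/- Let A = I − P and let A^# be the group inverse of A, i.e., the unique matrix satisfying A A^# A = A, A^# A A^# = A^#, and A^# A = A A^#. Define κ = (1/2)·max_{j∈[d]} ( A^#_{j,j} − min_{i∈[d]} A^#_{i,j} ). Then κ ≤ (1/γ⋆)·min{ d, 8 + ln(4/π⋆) }. -/

import Mathlib

open Finset Matrix Real MeasureTheory
open scoped Classical BigOperators

namespace MCEst

/-- A row-stochastic matrix. -/
def IsStochastic {d : ℕ} (P : Matrix (Fin d) (Fin d) ℝ) : Prop :=
  (∀ i j, 0 ≤ P i j) ∧ ∀ i, ∑ j, P i j = 1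

/-- A probability vector. -/
def IsProbVec {d : ℕ} (q : Fin d → ℝ) : Prop :=
  (∀ i, 0 ≤ q i) ∧ ∑ i, q i = 1

/-- Ergodicity (irreducibility + aperiodicity) of a finite stochastic matrix,
expressed as primitivity. -/
def IsErgodic {d : ℕ} (P : Matrix (Fin d) (Fin d) ℝ) : Prop :=
  ∃ k : ℕ, ∀ i j, 0 < (P ^ k) i j

/-- `π` is a stationary distribution of `P`. -/
def IsStationary {d : ℕ} (P : Matrix (Fin d) (Fin d) ℝ) (w : Fin d → ℝ) : Prop :=
  IsProbVec w ∧ ∀ j, ∑ i, w i * P i j = w j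

/-- Reversibility (detailed balance) of `P` w.r.t. `π`. -/
def IsReversible {d : ℕ} (P : Matrix (Fin d) (Fin d) ℝ) (w : Fin d → ℝ) : Prop :=
  ∀ i j, w i * P i j = w j * P j i

/-- The absolute spectral gap: one minus the largest absolute value of an
eigenvalue (root of the characteristic polynomial) different from 1. -/
noncomputable def absSpectralGap {d : ℕ} (P : Matrix (Fin d) (Fin d) ℝ) : ℝ :=
  1 - sSup {x : ℝ | ∃ μ : ℝ, μ ≠ 1 ∧ P.charpoly.IsRoot μ ∧ x = |μ|}

/-- Minimum entry of a vector. -/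
noncomputable def minEntry {d : ℕ} (v : Fin d → ℝ) : ℝ := ⨅ i, v i

/-- Probability of observing the sample path `x` (0-indexed, i.e. `x 0 = X_1`)
when the chain has initial distribution `q` and transition matrix `P`. -/
noncomputable def pathProb {d n : ℕ} (q : Fin d → ℝ) (P : Matrix (Fin d) (Fin d) ℝ)
    (x : Fin n → Fin d) : ℝ :=
  ∏ t : Fin n,
    if (t : ℕ) = 0 then q (x t)
    else P (x ⟨(t : ℕ) - 1, by have := t.isLt; omega⟩) (x t)

/-- Probability of an event for the length-`n` sample path of the chain. -/
noncomputable def prob {d n : ℕ} (q : Fin d → ℝ) (P : Matrix (Fin d) (Fin d) ℝ)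
    (E : Set (Fin n → Fin d)) : ℝ :=
  ∑ x : Fin n → Fin d, if x ∈ E then pathProb q P x else 0

/-- The successor of an index within `Fin n` (cyclically). -/
def succAt {n : ℕ} (t : Fin n) : Fin n :=
  ⟨((t : ℕ) + 1) % n, Nat.mod_lt _ (by have := t.isLt; omega)⟩

/-- Empirical state frequencies. -/
noncomputable def pihat {d n : ℕ} (x : Fin n → Fin d) (i : Fin d) : ℝ :=
  ((univ.filter fun t => x t = i).card : ℝ) / n

/-- Empirical doublet frequencies. -/
noncomputable def Mhat {d n : ℕ} (x : Fin n → Fin d) : Matrix (Fin d) (Fin d) ℝ :=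
  Matrix.of fun i j =>
    ((univ.filter fun t : Fin n => (t : ℕ) + 1 < n ∧ x t = i ∧ x (succAt t) = j).card : ℝ)
      / ((n : ℝ) - 1)

/-- Number of visits to `i` among the first `n-1` states. -/
def Ncount {d n : ℕ} (x : Fin n → Fin d) (i : Fin d) : ℕ :=
  (univ.filter fun t : Fin n => (t : ℕ) + 1 < n ∧ x t = i).card

/-- Number of observed transitions from `i` to `j`. -/
def Npair {d n : ℕ} (x : Fin n → Fin d) (i j : Fin d) : ℕ :=
  (univ.filter fun t : Fin n => (t : ℕ) + 1 < n ∧ x t = i ∧ x (succAt t) = j).card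

/-- Plug-in estimate of the matrix L. -/
noncomputable def Lhat {d n : ℕ} (x : Fin n → Fin d) : Matrix (Fin d) (Fin d) ℝ :=
  Matrix.of fun i j => Mhat x i j / (Real.sqrt (pihat x i) * Real.sqrt (pihat x j))

/-- Symmetrization of a square matrix. -/
noncomputable def symPart {d : ℕ} (A : Matrix (Fin d) (Fin d) ℝ) : Matrix (Fin d) (Fin d) ℝ :=
  (1 / 2 : ℝ) • (A + Aᵀ)

lemma symPart_isHermitian {d : ℕ} (A : Matrix (Fin d) (Fin d) ℝ) :
    (symPart A).IsHermitian := by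
  unfold symPart Matrix.IsHermitian
  ext i j
  simp [Matrix.conjTranspose_apply, Matrix.transpose_apply, Matrix.add_apply,
    Matrix.smul_apply]
  ring

/-- Eigenvalues of a hermitian matrix sorted in ascending order. -/
noncomputable def lamAsc {d : ℕ} {A : Matrix (Fin d) (Fin d) ℝ} (hA : A.IsHermitian) :
    Fin d → ℝ :=
  hA.eigenvalues ∘ Tuple.sort hA.eigenvalues

/-- The plug-in spectral gap estimator γ̂⋆ = 1 - min{1, max{λ̂₂, |λ̂_d|}}
(equal to 0 when some empirical frequency vanishes). -/
noncomputable def gapEstimator {d n : ℕ} (x : Fin n → Fin d) : ℝ :=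
  if h : 1 < d ∧ ∀ i, 0 < pihat x i then
    1 - min 1 (max (lamAsc (symPart_isHermitian (Lhat x)) ⟨d - 2, by have := h.1; omega⟩)
        |lamAsc (symPart_isHermitian (Lhat x)) ⟨0, by have := h.1; omega⟩|)
  else 0

/-- Spectral norm (ℓ²-operator norm) of a real square matrix. -/
noncomputable def specNorm {d : ℕ} (A : Matrix (Fin d) (Fin d) ℝ) : ℝ :=
  ‖Matrix.toEuclideanCLM (𝕜 := ℝ) A‖

/-- The matrix L = Diag(π)^{1/2} P Diag(π)^{-1/2}. -/
noncomputable def Lgen {d : ℕ} (w : Fin d → ℝ) (P : Matrix (Fin d) (Fin d) ℝ) :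
    Matrix (Fin d) (Fin d) ℝ :=
  Matrix.of fun i j => Real.sqrt (w i) * P i j / Real.sqrt (w j)

/-- Laplace-smoothed transition probability estimates. -/
noncomputable def Phat {d n : ℕ} (α : ℝ) (x : Fin n → Fin d) : Matrix (Fin d) (Fin d) ℝ :=
  Matrix.of fun i j => ((Npair x i j : ℝ) + α) / ((Ncount x i : ℝ) + d * α)

/-- The threshold t̂ from the algorithm. -/
noncomputable def that (d n : ℕ) (c δ : ℝ) : ℝ :=
  sInf {t : ℝ | 0 ≤ t ∧
    2 * (d : ℝ) ^ 2 * (1 + (⌈Real.logb c (2 * n / t)⌉₊ : ℝ)) * Real.exp (-t) ≤ δ}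

/-- The empirical bound B̂_{i,j}. -/
noncomputable def Bhat {d n : ℕ} (α c δ : ℝ) (x : Fin n → Fin d) (i j : Fin d) : ℝ :=
  (Real.sqrt (c * that d n c δ / (2 * (Ncount x i : ℝ))) +
    Real.sqrt (c * that d n c δ / (2 * (Ncount x i : ℝ)) +
      Real.sqrt (2 * c * Phat α x i j * (1 - Phat α x i j) * that d n c δ / (Ncount x i : ℝ)) +
      ((4 / 3) * that d n c δ + |α - d * α * Phat α x i j|) / (Ncount x i : ℝ))) ^ 2

/-- Group inverse of a square matrix (when it exists). -/
noncomputable def groupInv {d : ℕ} (A : Matrix (Fin d) (Fin d) ℝ) :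
    Matrix (Fin d) (Fin d) ℝ :=
  if h : ∃ G, A * G * A = A ∧ G * A * G = G ∧ A * G = G * A then h.choose else 0

/-- The (unique) stationary distribution of `P` (when it exists). -/
noncomputable def statDist {d : ℕ} (P : Matrix (Fin d) (Fin d) ℝ) : Fin d → ℝ :=
  if h : ∃ w, IsStationary P w then h.choose else 0

/-- The a-skipped sample path (X_a, X_{2a}, ..., X_{(n/a)·a}). -/
def skipPath {d n : ℕ} (a : ℕ) (x : Fin n → Fin d) : Fin (n / a) → Fin d :=
  fun s => x ⟨a * s.1 + (a - 1), by
    have hs := s.isLt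
    rcases Nat.eq_zero_or_pos a with h | h
    · subst h; simp [Nat.div_zero] at hs
    · have h2 : a * (s.1 + 1) ≤ a * (n / a) := Nat.mul_le_mul_left a hs
      have h3 : a * (n / a) ≤ n := Nat.mul_div_le n a
      have h4 : a * (s.1 + 1) = a * s.1 + a := Nat.mul_succ a s.1
      omega⟩

/-- The skip amount A = 2^k chosen by the doubling procedure. -/
noncomputable def Askip {d n : ℕ} (x : Fin n → Fin d) : ℕ :=
  if h : ∃ k : ℕ, 0.31 < gapEstimator (skipPath (2 ^ k) x) ∨ 2 ^ k = n then
    2 ^ Nat.find h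
  else n

/-- The doubling-skip estimator γ̃⋆ = 1 - (1 - γ̂⋆(A))^{1/A}. -/
noncomputable def tildeGap {d n : ℕ} (x : Fin n → Fin d) : ℝ :=
  1 - (1 - gapEstimator (skipPath (Askip x) x)) ^ ((Askip x : ℝ)⁻¹)

/-- Transition matrix with moves into `j` suppressed. -/
noncomputable def avoid {d : ℕ} (P : Matrix (Fin d) (Fin d) ℝ) (j : Fin d) :
    Matrix (Fin d) (Fin d) ℝ :=
  Matrix.of fun k l => if l = j then 0 else P k l

/-- Expected first positive hitting time of `j` starting from `i`:
`E_i[τ_j] = ∑_{t ≥ 0} Pr_i(τ_j > t)`. -/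
noncomputable def expHit {d : ℕ} (P : Matrix (Fin d) (Fin d) ℝ) (i j : Fin d) : ℝ :=
  ∑' t : ℕ, ∑ l, ((avoid P j) ^ t) i l

/-- The mixing time of the chain. -/
noncomputable def mixingTime {d : ℕ} (P : Matrix (Fin d) (Fin d) ℝ) (w : Fin d → ℝ) : ℕ :=
  sInf {t : ℕ | ∀ q : Fin d → ℝ, IsProbVec q →
    ∀ A : Finset (Fin d), |∑ i ∈ A, ((q ᵥ* (P ^ t)) i - w i)| ≤ 1 / 4}

/-- Algorithm 1: smoothed transition probability estimates (α = 1/d). -/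
noncomputable def algPhat {d n : ℕ} (x : Fin n → Fin d) : Matrix (Fin d) (Fin d) ℝ :=
  Phat (1 / (d : ℝ)) x

/-- Algorithm 1: stationary distribution of the smoothed estimate. -/
noncomputable def algPi {d n : ℕ} (x : Fin n → Fin d) : Fin d → ℝ :=
  statDist (algPhat x)

/-- Algorithm 1: spectral gap estimate. -/
noncomputable def algGap {d n : ℕ} (x : Fin n → Fin d) : ℝ :=
  if h : 1 < d then
    1 - max (lamAsc (symPart_isHermitian (Lgen (algPi x) (algPhat x))) ⟨d - 2, by omega⟩)
        |lamAsc (symPart_isHermitian (Lgen (algPi x) (algPhat x))) ⟨0, by omega⟩|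
  else 0

/-- Algorithm 1: relative sensitivity κ̂ computed from the group inverse. -/
noncomputable def algKappa {d n : ℕ} (x : Fin n → Fin d) : ℝ :=
  (1 / 2) * ⨆ j, (groupInv (1 - algPhat x) j j - ⨅ i, groupInv (1 - algPhat x) i j)

/-- Algorithm 1: bound b̂ on the stationary distribution error. -/
noncomputable def algb {d n : ℕ} (δ : ℝ) (x : Fin n → Fin d) : ℝ :=
  algKappa x * ⨆ i, ⨆ j, Bhat (1 / (d : ℝ)) 1.1 δ x i j

/-- Algorithm 1: the quantity ρ̂. -/
noncomputable def algRho {d n : ℕ} (δ : ℝ) (x : Fin n → Fin d) : ℝ :=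
  (1 / 2) * ⨆ i, max (algb δ x / algPi x i) (algb δ x / max 0 (algPi x i - algb δ x))

/-- Algorithm 1: bound ŵ on the spectral gap error. -/
noncomputable def algw {d n : ℕ} (δ : ℝ) (x : Fin n → Fin d) : ℝ :=
  2 * algRho δ x + algRho δ x ^ 2 +
    (1 + 2 * algRho δ x + algRho δ x ^ 2) *
      Real.sqrt (∑ i, ∑ j, (algPi x i / algPi x j) * Bhat (1 / (d : ℝ)) 1.1 δ x i j ^ 2)

/-- Observable lower bound on the minimum stationary probability from Algorithm 1. -/
noncomputable def algPiLB {d n : ℕ} (δ : ℝ) (x : Fin n → Fin d) : ℝ :=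
  ⨅ i, max 0 (algPi x i - algb δ x)

/-- Observable lower bound on the spectral gap from Algorithm 1. -/
noncomputable def algGapLB {d n : ℕ} (δ : ℝ) (x : Fin n → Fin d) : ℝ :=
  max 0 (algGap x - algw δ x)



/-- Uniqueness of the group inverse in a ring. -/
lemma grpInv_unique {R : Type*} [Ring R] {a x y : R}
    (hx1 : a * x * a = a) (hx2 : x * a * x = x) (hx3 : x * a = a * x)
    (hy1 : a * y * a = a) (hy2 : y * a * y = y) (hy3 : y * a = a * y) :
    x = y := by
  have hEF : a * x = (a * x) * (a * y) := by
    calc a * x = x * a := hx3.symm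
    _ = x * (a * y * a) := by rw [hy1]
    _ = (x * a) * (y * a) := by noncomm_ring
    _ = (a * x) * (a * y) := by rw [hx3, hy3]
  have hFEF : a * y = (a * x) * (a * y) := by
    calc a * y = (a * x * a) * y := by rw [hx1]
    _ = (a * x) * (a * y) := by noncomm_ring
  have hE : a * x = a * y := hEF.trans hFEF.symm
  calc x = x * a * x := hx2.symm
  _ = x * (a * x) := by noncomm_ring
  _ = x * (a * y) := by rw [hE]
  _ = (x * a) * y := by noncomm_ring
  _ = (a * x) * y := by rw [hx3]
  _ = (a * y) * y := by rw [hE]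
  _ = (y * a) * y := by rw [hy3]
  _ = y := hy2

section Chain

variable {d : ℕ} {P : Matrix (Fin d) (Fin d) ℝ} {w : Fin d → ℝ}

lemma pow_nonneg_entry (hP : IsStochastic P) (t : ℕ) : ∀ a b, 0 ≤ (P ^ t) a b := by
  induction t with
  | zero => intro a b; by_cases h : a = b <;> simp [Matrix.one_apply, h]
  | succ t ih =>
    intro a b
    rw [pow_succ, Matrix.mul_apply]
    exact Finset.sum_nonneg fun m _ => mul_nonneg (ih a m) (hP.1 m b)

lemma pow_row_sum (hP : IsStochastic P) (t : ℕ) : ∀ a, ∑ b, (P ^ t) a b = 1 := by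
  induction t with
  | zero => intro a; simp [Matrix.one_apply]
  | succ t ih =>
    intro a
    have : ∀ m : Fin d, ∑ b, (P ^ t) a m * P m b = (P ^ t) a m := by
      intro m; rw [← Finset.mul_sum, hP.2 m, mul_one]
    calc ∑ b, (P ^ (t+1)) a b = ∑ b, ∑ m, (P ^ t) a m * P m b := by
          simp [pow_succ, Matrix.mul_apply]
    _ = ∑ m, ∑ b, (P ^ t) a m * P m b := Finset.sum_comm
    _ = ∑ m, (P ^ t) a m := by simp_rw [this]
    _ = 1 := ih a

lemma pow_stationary (hP : IsStochastic P) (hst : IsStationary P w) (t : ℕ) :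
    ∀ b, ∑ a, w a * (P ^ t) a b = w b := by
  induction t with
  | zero => intro b; simp [Matrix.one_apply]
  | succ t ih =>
    intro b
    calc ∑ a, w a * (P ^ (t+1)) a b = ∑ a, ∑ m, w a * ((P ^ t) a m * P m b) := by
          simp [pow_succ, Matrix.mul_apply, Finset.mul_sum]
    _ = ∑ m, (∑ a, w a * (P ^ t) a m) * P m b := by
          rw [Finset.sum_comm]; congr 1; ext m; rw [Finset.sum_mul]; congr 1; ext a; ring
    _ = ∑ m, w m * P m b := by simp_rw [ih]
    _ = w b := hst.2 b

/-- Maximum principle: a fixed vector of an entrywise-positive stochastic matrix is constant. -/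
lemma const_of_pos_stoch {Q : Matrix (Fin d) (Fin d) ℝ}
    (hpos : ∀ i j, 0 < Q i j) (hrow : ∀ i, ∑ j, Q i j = 1)
    {u : Fin d → ℝ} (hu : Q *ᵥ u = u) : ∀ i j, u i = u j := by
  intro i j
  obtain ⟨i0, -, hmax⟩ := Finset.exists_max_image (univ : Finset (Fin d)) u ⟨i, mem_univ i⟩
  have key : ∀ b, u b = u i0 := by
    intro b
    by_contra hb
    have hlt : u b < u i0 := lt_of_le_of_ne (hmax b (mem_univ b)) hb
    have : u i0 < u i0 := by
      calc u i0 = ∑ m, Q i0 m * u m := (congr_fun hu i0).symm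
      _ < ∑ m, Q i0 m * u i0 := by
          apply Finset.sum_lt_sum
          · intro m _; exact mul_le_mul_of_nonneg_left (hmax m (mem_univ m)) (hpos i0 m).le
          · exact ⟨b, mem_univ b, by nlinarith [hpos i0 b]⟩
      _ = u i0 := by rw [← Finset.sum_mul, hrow, one_mul]
    exact lt_irrefl _ this
  rw [key i, key j]

lemma mul_pos_entries {A B : Matrix (Fin d) (Fin d) ℝ} (hd : 0 < d)
    (hA : ∀ i j, 0 < A i j) (hB : ∀ i j, 0 < B i j) : ∀ i j, 0 < (A * B) i j := by
  intro i j
  rw [Matrix.mul_apply]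
  have : Nonempty (Fin d) := ⟨⟨0, hd⟩⟩
  exact Finset.sum_pos (fun m _ => mul_pos (hA i m) (hB m j)) univ_nonempty

/-- evaluation of the characteristic polynomial. -/
lemma charpoly_eval (M : Matrix (Fin d) (Fin d) ℝ) (μ : ℝ) :
    M.charpoly.eval μ = (Matrix.diagonal (fun _ => μ) - M).det := by
  rw [Matrix.charpoly]
  rw [show Polynomial.eval μ (charmatrix M).det
      = ((charmatrix M).map (Polynomial.evalRingHom μ)).det from
    (RingHom.map_det (Polynomial.evalRingHom μ) (charmatrix M)).symm ▸ rfl]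
  · congr 1
    ext i j
    by_cases h : i = j <;>
      simp [charmatrix_apply, Matrix.diagonal_apply, h, Matrix.sub_apply]



lemma parseval_cols {M : Matrix (Fin d) (Fin d) ℝ} (hM : M.IsHermitian) (a b : Fin d) :
    ∑ k, hM.eigenvectorBasis k a * hM.eigenvectorBasis k b = if a = b then 1 else 0 := by
  have h := hM.eigenvectorBasis.sum_inner_mul_inner
    (EuclideanSpace.single a (1:ℝ)) (EuclideanSpace.single b (1:ℝ))
  simp only [EuclideanSpace.inner_single_left, EuclideanSpace.inner_single_right,
    starRingEnd_apply, star_trivial, one_mul, mul_one] at h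
  rw [h]
  simp [EuclideanSpace.single_apply, eq_comm]

lemma herm_mulVec_basis {M : Matrix (Fin d) (Fin d) ℝ} (hM : M.IsHermitian) (k : Fin d)
    (b : Fin d) : ∑ m, M b m * hM.eigenvectorBasis k m
      = hM.eigenvalues k * hM.eigenvectorBasis k b := by
  have := congr_fun (hM.mulVec_eigenvectorBasis k) b
  simpa [Matrix.mulVec, dotProduct] using this

lemma herm_apply_symm {M : Matrix (Fin d) (Fin d) ℝ} (hM : M.IsHermitian) (a b : Fin d) :
    M a b = M b a := by
  have := congr_fun (congr_fun hM a) b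
  simpa [Matrix.conjTranspose_apply] using this.symm

lemma herm_pow_apply {M : Matrix (Fin d) (Fin d) ℝ} (hM : M.IsHermitian) (t : ℕ) :
    ∀ a b, (M ^ t) a b = ∑ k, hM.eigenvalues k ^ t * hM.eigenvectorBasis k a
      * hM.eigenvectorBasis k b := by
  induction t with
  | zero => intro a b; simpa [Matrix.one_apply] using (parseval_cols hM a b).symm
  | succ t ih =>
    intro a b
    have h0 : (M ^ (t+1)) a b = ∑ m, (M ^ t) a m * M m b := by
      rw [pow_succ, Matrix.mul_apply]
    rw [h0]
    calc ∑ m, (M ^ t) a m * M m b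
        = ∑ m, ∑ k, hM.eigenvalues k ^ t * hM.eigenvectorBasis k a
            * hM.eigenvectorBasis k m * M m b := by
          refine Finset.sum_congr rfl fun m _ => ?_
          rw [ih a m, Finset.sum_mul]
    _ = ∑ k, ∑ m, hM.eigenvalues k ^ t * hM.eigenvectorBasis k a
            * (M b m * hM.eigenvectorBasis k m) := by
          rw [Finset.sum_comm]
          exact Finset.sum_congr rfl fun k _ => Finset.sum_congr rfl fun m _ => by
            rw [herm_apply_symm hM m b]; ring
    _ = ∑ k, hM.eigenvalues k ^ (t+1) * hM.eigenvectorBasis k a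
            * hM.eigenvectorBasis k b := by
          refine Finset.sum_congr rfl fun k _ => ?_
          rw [← Finset.mul_sum, herm_mulVec_basis hM k b]
          ring

lemma basis_orthonormality {M : Matrix (Fin d) (Fin d) ℝ} (hM : M.IsHermitian) (k l : Fin d) :
    ∑ b, hM.eigenvectorBasis k b * hM.eigenvectorBasis l b = if k = l then 1 else 0 := by
  have h := orthonormal_iff_ite.mp hM.eigenvectorBasis.orthonormal k l
  rw [← h]
  simp [PiLp.inner_apply]
  exact Finset.sum_congr rfl fun _ _ => mul_comm _ _

lemma Lgen_mulVec_apply (hpos : ∀ i, 0 < w i) (x : Fin d → ℝ) (a : Fin d) :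
    ((Lgen w P) *ᵥ x) a
      = Real.sqrt (w a) * ((P *ᵥ fun b => x b / Real.sqrt (w b)) a) := by
  simp only [Matrix.mulVec, dotProduct, Lgen, Matrix.of_apply, Finset.mul_sum]
  refine Finset.sum_congr rfl fun b _ => ?_
  have hb := Real.sqrt_pos.mpr (hpos b)
  field_simp

lemma mulVec_pow_eig {μ : ℝ} {v : Fin d → ℝ} (hv : P *ᵥ v = μ • v) (t : ℕ) :
    (P ^ t) *ᵥ v = μ ^ t • v := by
  induction t with
  | zero => simp
  | succ t ih =>
    rw [pow_succ, ← Matrix.mulVec_mulVec, hv, Matrix.mulVec_smul, ih, smul_smul, pow_succ]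
    rw [mul_comm]

lemma fixedP_const (hP : IsStochastic P) (herg : IsErgodic P)
    {u : Fin d → ℝ} (hu : P *ᵥ u = u) : ∀ i j, u i = u j := by
  obtain ⟨k, hk⟩ := herg
  have hu' : (P ^ k) *ᵥ u = u := by
    have := mulVec_pow_eig (μ := 1) (v := u) (by simpa using hu) k
    simpa using this
  exact const_of_pos_stoch hk (pow_row_sum hP k) hu'

lemma Lgen_fixed (hP : IsStochastic P) (herg : IsErgodic P) (hpos : ∀ i, 0 < w i)
    {x : Fin d → ℝ} (hx : (Lgen w P) *ᵥ x = x) :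
    ∃ c : ℝ, ∀ a, x a = c * Real.sqrt (w a) := by
  rcases isEmpty_or_nonempty (Fin d) with hde | hde
  · exact ⟨0, fun a => absurd trivial (hde.elim a)⟩
  set u : Fin d → ℝ := fun a => x a / Real.sqrt (w a) with hu_def
  have key : ∀ a, Real.sqrt (w a) * ((P *ᵥ u) a) = x a := by
    intro a; rw [← Lgen_mulVec_apply hpos x a, hx]
  have hPu : P *ᵥ u = u := by
    ext a
    have ha := Real.sqrt_pos.mpr (hpos a)
    have : (P *ᵥ u) a = x a / Real.sqrt (w a) := by
      rw [eq_div_iff ha.ne', mul_comm]; exact key a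
    rw [this]
  have hconst := fixedP_const hP herg hPu
  obtain ⟨i0⟩ := hde
  refine ⟨u i0, fun a => ?_⟩
  have ha := Real.sqrt_pos.mpr (hpos a)
  have h1 : u a = u i0 := hconst a i0
  have h2 : x a = u a * Real.sqrt (w a) := by
    simp only [hu_def]; field_simp
  rw [h2, h1]

lemma eig_eigvec_P (hpos : ∀ i, 0 < w i) {μ : ℝ} {x : Fin d → ℝ}
    (hx : (Lgen w P) *ᵥ x = μ • x) :
    P *ᵥ (fun a => x a / Real.sqrt (w a)) = μ • (fun a => x a / Real.sqrt (w a)) := by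
  ext a
  have ha := Real.sqrt_pos.mpr (hpos a)
  have key : Real.sqrt (w a) * ((P *ᵥ fun b => x b / Real.sqrt (w b)) a) = μ * x a := by
    rw [← Lgen_mulVec_apply hpos x a, hx]; simp
  have : (P *ᵥ fun b => x b / Real.sqrt (w b)) a = μ * x a / Real.sqrt (w a) := by
    rw [eq_div_iff ha.ne', mul_comm]; exact key
  rw [this]
  simp only [Pi.smul_apply, smul_eq_mul]
  ring

lemma eig_isRoot (hpos : ∀ i, 0 < w i) {μ : ℝ} {x : Fin d → ℝ} (hx0 : x ≠ 0)
    (hx : (Lgen w P) *ᵥ x = μ • x) : P.charpoly.IsRoot μ := by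
  set u : Fin d → ℝ := fun a => x a / Real.sqrt (w a) with hu_def
  have hu0 : u ≠ 0 := by
    intro h
    apply hx0
    ext a
    have := congr_fun h a
    simp only [hu_def, Pi.zero_apply] at this ⊢
    have ha := Real.sqrt_pos.mpr (hpos a)
    exact (div_eq_zero_iff.mp this).resolve_right ha.ne'
  have hPu : P *ᵥ u = μ • u := eig_eigvec_P hpos hx
  rw [Polynomial.IsRoot, charpoly_eval]
  rw [← Matrix.exists_mulVec_eq_zero_iff]
  refine ⟨u, hu0, ?_⟩
  ext a
  simp only [Matrix.mulVec, dotProduct, Matrix.sub_apply, Matrix.diagonal_apply, sub_mul,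
    Finset.sum_sub_distrib, Pi.zero_apply]
  have h1 : ∑ b, (if a = b then μ else 0) * u b = μ * u a := by
    simp
  have h2 : ∑ b, P a b * u b = μ * u a := by
    have := congr_fun hPu a
    simpa [Matrix.mulVec, dotProduct] using this
  rw [h1, h2, sub_self]

lemma root_eigvec {μ : ℝ} (hroot : P.charpoly.IsRoot μ) :
    ∃ v : Fin d → ℝ, v ≠ 0 ∧ P *ᵥ v = μ • v := by
  have hdet : (Matrix.diagonal (fun _ : Fin d => μ) - P).det = 0 := by
    rw [← charpoly_eval]; exact hroot
  obtain ⟨v, hv0, hv⟩ := Matrix.exists_mulVec_eq_zero_iff.mpr hdet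
  refine ⟨v, hv0, ?_⟩
  ext a
  have := congr_fun hv a
  simp only [Matrix.mulVec, dotProduct, Matrix.sub_apply, Matrix.diagonal_apply, sub_mul,
    Finset.sum_sub_distrib, Pi.zero_apply] at this
  have h1 : ∑ b, (if a = b then μ else 0) * v b = μ * v a := by
    simp
  rw [h1] at this
  have h2 := sub_eq_zero.mp this
  simp only [Matrix.mulVec, dotProduct, Pi.smul_apply, smul_eq_mul]
  linarith

lemma root_abs_lt_one (hP : IsStochastic P) (herg : IsErgodic P)
    {μ : ℝ} (hroot : P.charpoly.IsRoot μ) (hne : μ ≠ 1) : |μ| < 1 := by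
  obtain ⟨v, hv0, hv⟩ := root_eigvec hroot
  obtain ⟨i1, hi1⟩ : ∃ i, v i ≠ 0 := by
    by_contra h
    push_neg at h
    exact hv0 (funext fun i => h i)
  have hd : 0 < d := i1.pos
  -- maximizer of |v|
  obtain ⟨i0, -, hmax⟩ := Finset.exists_max_image (univ : Finset (Fin d))
    (fun i => |v i|) ⟨i1, mem_univ i1⟩
  have hv0i : 0 < |v i0| := lt_of_lt_of_le (abs_pos.mpr hi1) (hmax i1 (mem_univ i1))
  have habs : |μ| ≤ 1 := by
    have h1 : |μ| * |v i0| = |∑ b, P i0 b * v b| := by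
      rw [← abs_mul]
      congr 1
      have := congr_fun hv i0
      simp only [Matrix.mulVec, dotProduct, Pi.smul_apply, smul_eq_mul] at this
      linarith
    have h2 : |∑ b, P i0 b * v b| ≤ ∑ b, P i0 b * |v i0| := by
      refine (Finset.abs_sum_le_sum_abs _ _).trans ?_
      refine Finset.sum_le_sum fun b _ => ?_
      rw [abs_mul, abs_of_nonneg (hP.1 i0 b)]
      exact mul_le_mul_of_nonneg_left (hmax b (mem_univ b)) (hP.1 i0 b)
    have h3 : ∑ b, P i0 b * |v i0| = |v i0| := by
      rw [← Finset.sum_mul, hP.2 i0, one_mul]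
    nlinarith
  rcases lt_or_eq_of_le habs with h | h
  · exact h
  exfalso
  have : μ = 1 ∨ μ = -1 := abs_eq (by norm_num : (0:ℝ) ≤ 1) |>.mp h
  have hμ : μ = -1 := this.resolve_left hne
  subst hμ
  -- v is fixed by P^(2k) which has positive entries
  obtain ⟨k, hk⟩ := herg
  have hQpos : ∀ i j, 0 < (P ^ k * P ^ k) i j :=
    mul_pos_entries hd hk hk
  have hQrow : ∀ i, ∑ j, (P ^ k * P ^ k) i j = 1 := by
    intro i; rw [← pow_add]; exact pow_row_sum hP (k + k) i
  have hQfix : (P ^ k * P ^ k) *ᵥ v = v := by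
    rw [← pow_add, mulVec_pow_eig hv (k + k)]
    rw [show ((-1:ℝ)) ^ (k + k) = 1 from by
      rw [show k + k = 2 * k by ring, pow_mul]; norm_num]
    simp
  have hconst := const_of_pos_stoch hQpos hQrow hQfix
  -- v constant c, and P v = -v gives c = -c
  have hc : ∀ i, v i = v i0 := fun i => hconst i i0
  have h1 : (P *ᵥ v) i0 = v i0 := by
    have : ∀ b, v b = v i0 := hc
    simp only [Matrix.mulVec, dotProduct]
    calc ∑ b, P i0 b * v b = ∑ b, P i0 b * v i0 := by
          refine Finset.sum_congr rfl fun b _ => by rw [this b]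
    _ = v i0 := by rw [← Finset.sum_mul, hP.2 i0, one_mul]
  have h2 : (P *ᵥ v) i0 = -v i0 := by
    rw [hv]; simp
  have : v i0 = 0 := by linarith [h1.symm.trans h2]
  exact hi1 (by rw [hc i1, this])


lemma gap_facts (hP : IsStochastic P) (herg : IsErgodic P) :
    0 < absSpectralGap P ∧ absSpectralGap P ≤ 1 ∧
    ∀ μ : ℝ, P.charpoly.IsRoot μ → μ ≠ 1 → |μ| ≤ 1 - absSpectralGap P := by
  classical
  set S0 : Set ℝ := {x : ℝ | ∃ μ : ℝ, μ ≠ 1 ∧ P.charpoly.IsRoot μ ∧ x = |μ|} with hS0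
  have hgap : absSpectralGap P = 1 - sSup S0 := rfl
  have hfin : S0.Finite := by
    have hne0 : P.charpoly ≠ 0 := (Matrix.charpoly_monic P).ne_zero
    refine Set.Finite.subset ((Polynomial.finite_setOf_isRoot hne0).image abs) ?_
    rintro x ⟨μ, -, hroot, rfl⟩
    exact ⟨μ, hroot, rfl⟩
  have hmem_lt : ∀ x ∈ S0, x < 1 := by
    rintro x ⟨μ, hne, hroot, rfl⟩
    exact root_abs_lt_one hP herg hroot hne
  rcases S0.eq_empty_or_nonempty with he | hne
  · rw [hgap, he]
    rw [Real.sSup_empty]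
    refine ⟨by norm_num, by norm_num, fun μ hroot hμne => ?_⟩
    exfalso
    have : |μ| ∈ S0 := ⟨μ, hμne, hroot, rfl⟩
    rw [he] at this
    exact this
  · have hsup_mem : sSup S0 ∈ S0 := hne.csSup_mem hfin
    have h1 : sSup S0 < 1 := hmem_lt _ hsup_mem
    have h0 : 0 ≤ sSup S0 := by
      obtain ⟨μ, -, -, hx⟩ := hsup_mem
      rw [hx]; exact abs_nonneg μ
    refine ⟨by rw [hgap]; linarith, by rw [hgap]; linarith, fun μ hroot hμne => ?_⟩
    have hmem : |μ| ∈ S0 := ⟨μ, hμne, hroot, rfl⟩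
    have := le_csSup hfin.bddAbove hmem
    rw [hgap]; linarith

lemma Lgen_isHermitian (hrev : IsReversible P w) (hpos : ∀ i, 0 < w i) :
    (Lgen w P).IsHermitian := by
  unfold Matrix.IsHermitian
  ext a b
  simp only [Matrix.conjTranspose_apply, star_trivial, Lgen, Matrix.of_apply]
  have h1 : Real.sqrt (w a) * Real.sqrt (w a) = w a := Real.mul_self_sqrt (hpos a).le
  have h2 : Real.sqrt (w b) * Real.sqrt (w b) = w b := Real.mul_self_sqrt (hpos b).le
  have ha := Real.sqrt_pos.mpr (hpos a)
  have hb := Real.sqrt_pos.mpr (hpos b)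
  rw [div_eq_div_iff ha.ne' hb.ne']
  linear_combination P b a * h2 - P a b * h1 - hrev a b

lemma Lgen_pow_apply (hpos : ∀ i, 0 < w i) (t : ℕ) :
    ∀ a b, ((Lgen w P) ^ t) a b = Real.sqrt (w a) * (P ^ t) a b / Real.sqrt (w b) := by
  induction t with
  | zero =>
    intro a b
    by_cases h : a = b
    · subst h; simp [Matrix.one_apply, (Real.sqrt_pos.mpr (hpos a)).ne']
    · simp [Matrix.one_apply, h]
  | succ t ih =>
    intro a b
    have hb := Real.sqrt_pos.mpr (hpos b)
    rw [pow_succ, Matrix.mul_apply, pow_succ, Matrix.mul_apply, Finset.mul_sum, Finset.sum_div]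
    refine Finset.sum_congr rfl fun m _ => ?_
    have hm := Real.sqrt_pos.mpr (hpos m)
    rw [ih a m]
    simp only [Lgen, Matrix.of_apply]
    field_simp

lemma Lgen_mulVec_rho (hP : IsStochastic P) (hpos : ∀ i, 0 < w i) :
    (Lgen w P) *ᵥ (fun a => Real.sqrt (w a)) = fun a => Real.sqrt (w a) := by
  ext a
  rw [Lgen_mulVec_apply hpos]
  have h1 : (P *ᵥ fun b => Real.sqrt (w b) / Real.sqrt (w b)) a = 1 := by
    simp only [Matrix.mulVec, dotProduct]
    calc ∑ b, P a b * (Real.sqrt (w b) / Real.sqrt (w b))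
        = ∑ b, P a b := by
          refine Finset.sum_congr rfl fun b _ => ?_
          rw [div_self (Real.sqrt_pos.mpr (hpos b)).ne', mul_one]
    _ = 1 := hP.2 a
  rw [h1, mul_one]

lemma exists_top (hP : IsStochastic P) (herg : IsErgodic P) (hst : IsStationary P w)
    (hrev : IsReversible P w) (hpos : ∀ i, 0 < w i) (hd : 0 < d) :
    ∃ k0 : Fin d,
      (Lgen_isHermitian hrev hpos).eigenvalues k0 = 1 ∧
      (∀ a b, (Lgen_isHermitian hrev hpos).eigenvectorBasis k0 a *
              (Lgen_isHermitian hrev hpos).eigenvectorBasis k0 b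
          = Real.sqrt (w a) * Real.sqrt (w b)) ∧
      (∀ k, (Lgen_isHermitian hrev hpos).eigenvalues k = 1 → k = k0) := by
  classical
  set hM := Lgen_isHermitian hrev hpos with hM_def
  set lam := hM.eigenvalues with lam_def
  set v := hM.eigenvectorBasis with v_def
  have hsumw : ∑ a, w a = 1 := hst.1.2
  set ρ : Fin d → ℝ := fun a => Real.sqrt (w a) with ρ_def
  have hMρ : (Lgen w P) *ᵥ ρ = ρ := Lgen_mulVec_rho hP hpos
  -- coefficients of ρ in the eigenbasis
  have stepA : ∀ k, lam k ≠ 1 → ∑ a, v k a * ρ a = 0 := by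
    intro k hk
    have key : ∑ a, v k a * ρ a = lam k * ∑ a, v k a * ρ a := by
      calc ∑ a, v k a * ρ a = ∑ a, v k a * ((Lgen w P) *ᵥ ρ) a := by rw [hMρ]
      _ = ∑ a, ∑ b, v k a * ((Lgen w P) a b * ρ b) := by
          refine Finset.sum_congr rfl fun a _ => ?_
          simp only [Matrix.mulVec, dotProduct, Finset.mul_sum]
      _ = ∑ b, (∑ a, (Lgen w P) b a * v k a) * ρ b := by
          rw [Finset.sum_comm]
          refine Finset.sum_congr rfl fun b _ => ?_
          rw [Finset.sum_mul]
          refine Finset.sum_congr rfl fun a _ => ?_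
          rw [herm_apply_symm hM a b]; ring
      _ = ∑ b, (lam k * v k b) * ρ b := by
          refine Finset.sum_congr rfl fun b _ => ?_
          rw [herm_mulVec_basis hM k b]
      _ = lam k * ∑ a, v k a * ρ a := by
          rw [Finset.mul_sum]
          exact Finset.sum_congr rfl fun b _ => by ring
    have : (1 - lam k) * (∑ a, v k a * ρ a) = 0 := by linarith [key]
    rcases mul_eq_zero.mp this with h | h
    · exact absurd (by linarith : lam k = 1) hk
    · exact h
  have stepB : ∃ k, lam k = 1 := by
    by_contra hno
    push_neg at hno
    set ρE : EuclideanSpace ℝ (Fin d) := (WithLp.equiv 2 (Fin d → ℝ)).symm ρ with ρE_def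
    have hrepr := v.sum_repr' ρE
    have hcoef : ∀ k, (inner ℝ (v k) ρE : ℝ) = 0 := by
      intro k
      rw [show (inner ℝ (v k) ρE : ℝ) = ∑ a, v k a * ρ a from by
        simp [PiLp.inner_apply, ρE_def, WithLp.equiv_symm_apply]
        exact Finset.sum_congr rfl fun _ _ => mul_comm _ _]
      exact stepA k (hno k)
    rw [show ∑ k, (inner ℝ (v k) ρE : ℝ) • v k = (0 : EuclideanSpace ℝ (Fin d)) from by
      refine Finset.sum_eq_zero fun k _ => by rw [hcoef k, zero_smul]] at hrepr
    have : ρ ⟨0, hd⟩ = 0 := by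
      have := congr_arg (fun x : EuclideanSpace ℝ (Fin d) => x ⟨0, hd⟩) hrepr.symm
      simpa [ρE_def, WithLp.equiv_symm_apply] using this
    exact (Real.sqrt_pos.mpr (hpos ⟨0, hd⟩)).ne' this
  obtain ⟨k0, hk0⟩ := stepB
  -- each eigenvector with eigenvalue 1 is proportional to ρ
  have hprop : ∀ k, lam k = 1 → ∃ c : ℝ, (∀ a, v k a = c * ρ a) ∧ c * c = 1 := by
    intro k hk
    have hfix : (Lgen w P) *ᵥ ⇑(v k) = ⇑(v k) := by
      have := hM.mulVec_eigenvectorBasis k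
      rw [← lam_def, ← v_def, hk, one_smul] at this
      exact this
    obtain ⟨c, hc'⟩ := Lgen_fixed hP herg hpos hfix
    have hc : ∀ a, v k a = c * Real.sqrt (w a) := fun a => hc' a
    refine ⟨c, hc, ?_⟩
    have h1 : ∑ b, v k b * v k b = 1 := by
      have := basis_orthonormality hM k k
      simpa using this
    have h2 : ∑ b, v k b * v k b = c * c := by
      calc ∑ b, v k b * v k b = ∑ b, c * c * w b := by
            refine Finset.sum_congr rfl fun b _ => ?_
            rw [hc b]
            have h3 : Real.sqrt (w b) * Real.sqrt (w b) = w b :=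
              Real.mul_self_sqrt (hpos b).le
            simp only [ρ_def]
            linear_combination (c * c) * h3
      _ = c * c := by rw [← Finset.mul_sum, hsumw, mul_one]
    linarith [h1, h2]
  obtain ⟨c0, hc0, hc0sq⟩ := hprop k0 hk0
  refine ⟨k0, hk0, ?_, ?_⟩
  · intro a b
    rw [hc0 a, hc0 b]
    simp only [ρ_def]
    linear_combination (Real.sqrt (w a) * Real.sqrt (w b)) * hc0sq
  · intro k hk
    by_contra hne
    obtain ⟨c, hc, hcsq⟩ := hprop k hk
    have horth : ∑ b, v k b * v k0 b = 0 := by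
      have := basis_orthonormality hM k k0
      simpa [hne] using this
    have : ∑ b, v k b * v k0 b = c * c0 := by
      calc ∑ b, v k b * v k0 b = ∑ b, c * c0 * w b := by
            refine Finset.sum_congr rfl fun b _ => ?_
            rw [hc b, hc0 b]
            have h3 : Real.sqrt (w b) * Real.sqrt (w b) = w b :=
              Real.mul_self_sqrt (hpos b).le
            simp only [ρ_def]
            linear_combination (c * c0) * h3
      _ = c * c0 := by rw [← Finset.mul_sum, hsumw, mul_one]
    have hcc0 : c * c0 = 0 := by linarith [horth, this]
    rcases mul_eq_zero.mp hcc0 with h | h <;> nlinarith [hcsq, hc0sq]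

lemma key_decay (hP : IsStochastic P) (herg : IsErgodic P) (hst : IsStationary P w)
    (hrev : IsReversible P w) (hpos : ∀ i, 0 < w i) (hd : 0 < d) (t : ℕ) (a b : Fin d) :
    |(P ^ t) a b - w b|
      ≤ (1 - absSpectralGap P) ^ t * (Real.sqrt (w b) / Real.sqrt (w a)) := by
  classical
  obtain ⟨hgap_pos, hgap_le, hroot_bound⟩ := gap_facts hP herg
  set r : ℝ := 1 - absSpectralGap P with hr_def
  have hr0 : 0 ≤ r := by simp only [hr_def]; linarith
  set hM := Lgen_isHermitian hrev hpos with hM_def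
  obtain ⟨k0, hk0, hk0vec, hk0uniq⟩ := exists_top hP herg hst hrev hpos hd
  set lam := hM.eigenvalues with lam_def
  set v := hM.eigenvectorBasis with v_def
  have ha := Real.sqrt_pos.mpr (hpos a)
  have hb := Real.sqrt_pos.mpr (hpos b)
  -- eigenvalue bound for k ≠ k0
  have heig : ∀ k, k ≠ k0 → |lam k| ≤ r := by
    intro k hk
    have hne1 : lam k ≠ 1 := fun h => hk (hk0uniq k h)
    have hx : (Lgen w P) *ᵥ ⇑(v k) = lam k • ⇑(v k) := hM.mulVec_eigenvectorBasis k
    have hx0 : ⇑(v k) ≠ 0 := by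
      intro h
      have := v.orthonormal.ne_zero k
      exact this (by ext i; exact congr_fun h i)
    exact hroot_bound _ (eig_isRoot hpos hx0 hx) hne1
  -- split off the top eigenvector
  set E : ℝ := ∑ k ∈ univ.erase k0, lam k ^ t * v k a * v k b with hE_def
  have hsplit : ((Lgen w P) ^ t) a b = E + Real.sqrt (w a) * Real.sqrt (w b) := by
    rw [herm_pow_apply hM t a b, ← Finset.sum_erase_add _ _ (mem_univ k0)]
    rw [← lam_def, ← v_def, ← hE_def, hk0, one_pow, one_mul, hk0vec a b]
  have hPt : (P ^ t) a b = ((Lgen w P) ^ t) a b * Real.sqrt (w b) / Real.sqrt (w a) := by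
    rw [Lgen_pow_apply hpos t a b]
    field_simp
  have hwb : Real.sqrt (w b) * Real.sqrt (w b) = w b := Real.mul_self_sqrt (hpos b).le
  have hdiff : (P ^ t) a b - w b = E * (Real.sqrt (w b) / Real.sqrt (w a)) := by
    rw [hPt, hsplit]
    field_simp
    linear_combination Real.sqrt (w a) * hwb
  -- bound on E
  have hEbound : |E| ≤ r ^ t := by
    have h1 : |E| ≤ ∑ k ∈ univ.erase k0, |lam k| ^ t * (|v k a| * |v k b|) := by
      refine (Finset.abs_sum_le_sum_abs _ _).trans ?_
      refine Finset.sum_le_sum fun k _ => ?_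
      rw [abs_mul, abs_mul, abs_pow]
      exact le_of_eq (by ring)
    have h2 : ∑ k ∈ univ.erase k0, |lam k| ^ t * (|v k a| * |v k b|)
        ≤ ∑ k ∈ univ.erase k0, r ^ t * (|v k a| * |v k b|) := by
      refine Finset.sum_le_sum fun k hk => ?_
      have := heig k (Finset.ne_of_mem_erase hk)
      exact mul_le_mul_of_nonneg_right (pow_le_pow_left₀ (abs_nonneg _) this t)
        (mul_nonneg (abs_nonneg _) (abs_nonneg _))
    have h3 : ∑ k ∈ univ.erase k0, r ^ t * (|v k a| * |v k b|)
        ≤ r ^ t * ∑ k, |v k a| * |v k b| := by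
      rw [← Finset.mul_sum]
      refine mul_le_mul_of_nonneg_left ?_ (pow_nonneg hr0 t)
      refine Finset.sum_le_sum_of_subset_of_nonneg (Finset.erase_subset _ _)
        fun k _ _ => mul_nonneg (abs_nonneg _) (abs_nonneg _)
    have hCS : ∑ k, |v k a| * |v k b| ≤ 1 := by
      have hsq := Finset.sum_mul_sq_le_sq_mul_sq univ (fun k => |v k a|) (fun k => |v k b|)
      have hna : ∑ k, |v k a| ^ 2 = 1 := by
        have h := parseval_cols hM a a
        simp at h
        rw [← h]
        exact Finset.sum_congr rfl fun k _ => by rw [sq_abs]; ring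
      have hnb : ∑ k, |v k b| ^ 2 = 1 := by
        have h := parseval_cols hM b b
        simp at h
        rw [← h]
        exact Finset.sum_congr rfl fun k _ => by rw [sq_abs]; ring
      have hpos' : 0 ≤ ∑ k, |v k a| * |v k b| :=
        Finset.sum_nonneg fun k _ => mul_nonneg (abs_nonneg _) (abs_nonneg _)
      nlinarith [hsq, hna, hnb, hpos']
    calc |E| ≤ ∑ k ∈ univ.erase k0, |lam k| ^ t * (|v k a| * |v k b|) := h1
    _ ≤ ∑ k ∈ univ.erase k0, r ^ t * (|v k a| * |v k b|) := h2
    _ ≤ r ^ t * ∑ k, |v k a| * |v k b| := h3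
    _ ≤ r ^ t * 1 := mul_le_mul_of_nonneg_left hCS (pow_nonneg hr0 t)
    _ = r ^ t := mul_one _
  rw [hdiff, abs_mul, abs_of_nonneg (le_of_lt (div_pos hb ha))]
  exact mul_le_mul_of_nonneg_right hEbound (le_of_lt (div_pos hb ha))

lemma summable_pow_sub (hP : IsStochastic P) (herg : IsErgodic P) (hst : IsStationary P w)
    (hrev : IsReversible P w) (hpos : ∀ i, 0 < w i) (a b : Fin d) :
    Summable fun t : ℕ => (P ^ t) a b - w b := by
  have hd : 0 < d := a.pos
  obtain ⟨hgap_pos, hgap_le, -⟩ := gap_facts hP herg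
  set r : ℝ := 1 - absSpectralGap P with hr_def
  have hr0 : 0 ≤ r := by simp only [hr_def]; linarith
  have hr1 : r < 1 := by simp only [hr_def]; linarith
  refine Summable.of_norm_bounded
    (g := fun t => (Real.sqrt (w b) / Real.sqrt (w a)) * r ^ t)
    ((summable_geometric_of_lt_one hr0 hr1).mul_left _) fun t => ?_
  rw [Real.norm_eq_abs]
  calc |(P ^ t) a b - w b| ≤ r ^ t * (Real.sqrt (w b) / Real.sqrt (w a)) :=
        key_decay hP herg hst hrev hpos hd t a b
  _ = (Real.sqrt (w b) / Real.sqrt (w a)) * r ^ t := by ring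

end Chain

/-- The fundamental-matrix candidate for the group inverse. -/
noncomputable def Zmat {d : ℕ} (P : Matrix (Fin d) (Fin d) ℝ) (w : Fin d → ℝ) :
    Matrix (Fin d) (Fin d) ℝ :=
  Matrix.of fun a b => ∑' t : ℕ, ((P ^ t) a b - w b)

/-- The rank-one projection onto the stationary distribution. -/
def PiMat (d : ℕ) (w : Fin d → ℝ) : Matrix (Fin d) (Fin d) ℝ :=
  Matrix.of fun _ b => w b

section Chain2

variable {d : ℕ} {P : Matrix (Fin d) (Fin d) ℝ} {w : Fin d → ℝ}

lemma Z_left (hP : IsStochastic P) (herg : IsErgodic P) (hst : IsStationary P w)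
    (hrev : IsReversible P w) (hpos : ∀ i, 0 < w i) :
    (1 - P) * Zmat P w = 1 - PiMat d w := by
  have hsum := summable_pow_sub hP herg hst hrev hpos
  rw [Matrix.sub_mul, Matrix.one_mul]
  ext a b
  simp only [Matrix.sub_apply]
  have hPZ : (P * Zmat P w) a b = ∑' t : ℕ, ((P ^ (t+1)) a b - w b) := by
    rw [Matrix.mul_apply]
    have h1 : ∀ m, P a m * Zmat P w m b = ∑' t : ℕ, P a m * ((P ^ t) m b - w b) := by
      intro m
      rw [Zmat, Matrix.of_apply, tsum_mul_left]
    simp_rw [h1]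
    rw [← Summable.tsum_finsetSum (fun m _ => (hsum m b).mul_left (P a m))]
    congr 1
    ext t
    have h2 : ∑ m, P a m * ((P ^ t) m b - w b)
        = ∑ m, P a m * (P ^ t) m b - (∑ m, P a m) * w b := by
      rw [Finset.sum_mul, ← Finset.sum_sub_distrib]
      exact Finset.sum_congr rfl fun m _ => by ring
    rw [h2, hP.2 a, one_mul]
    congr 1
    rw [pow_succ', Matrix.mul_apply]
  have hshift : ∑' t : ℕ, ((P ^ (t+1)) a b - w b)
      = Zmat P w a b - ((P ^ 0) a b - w b) := by
    have := Summable.tsum_eq_zero_add (hsum a b)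
    rw [Zmat, Matrix.of_apply]
    linarith [this]
  rw [hPZ, hshift]
  simp only [pow_zero, PiMat, Matrix.of_apply, Zmat]
  ring

lemma Z_right (hP : IsStochastic P) (herg : IsErgodic P) (hst : IsStationary P w)
    (hrev : IsReversible P w) (hpos : ∀ i, 0 < w i) :
    Zmat P w * (1 - P) = 1 - PiMat d w := by
  have hsum := summable_pow_sub hP herg hst hrev hpos
  rw [Matrix.mul_sub, Matrix.mul_one]
  ext a b
  simp only [Matrix.sub_apply]
  have hZP : (Zmat P w * P) a b = ∑' t : ℕ, ((P ^ (t+1)) a b - w b) := by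
    rw [Matrix.mul_apply]
    have h1 : ∀ m, Zmat P w a m * P m b = ∑' t : ℕ, ((P ^ t) a m - w m) * P m b := by
      intro m
      rw [Zmat, Matrix.of_apply, tsum_mul_right]
    simp_rw [h1]
    rw [← Summable.tsum_finsetSum (fun m _ => (hsum a m).mul_right (P m b))]
    congr 1
    ext t
    have h2 : ∑ m, ((P ^ t) a m - w m) * P m b
        = ∑ m, (P ^ t) a m * P m b - ∑ m, w m * P m b := by
      rw [← Finset.sum_sub_distrib]
      exact Finset.sum_congr rfl fun m _ => by ring
    rw [h2, hst.2 b]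
    congr 1
  have hshift : ∑' t : ℕ, ((P ^ (t+1)) a b - w b)
      = Zmat P w a b - ((P ^ 0) a b - w b) := by
    have := Summable.tsum_eq_zero_add (hsum a b)
    rw [Zmat, Matrix.of_apply]
    linarith [this]
  rw [hZP, hshift]
  simp only [pow_zero, PiMat, Matrix.of_apply, Zmat]
  ring

lemma PiMat_mul_P (hP : IsStochastic P) (hst : IsStationary P w) :
    PiMat d w * P = PiMat d w := by
  ext a b
  rw [Matrix.mul_apply]
  simp only [PiMat, Matrix.of_apply]
  exact hst.2 b

lemma PiMat_mul_Z (hP : IsStochastic P) (herg : IsErgodic P) (hst : IsStationary P w)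
    (hrev : IsReversible P w) (hpos : ∀ i, 0 < w i) :
    PiMat d w * Zmat P w = 0 := by
  have hsum := summable_pow_sub hP herg hst hrev hpos
  ext a b
  rw [Matrix.mul_apply]
  simp only [PiMat, Matrix.of_apply, Matrix.zero_apply]
  have h1 : ∀ m, w m * Zmat P w m b = ∑' t : ℕ, w m * ((P ^ t) m b - w b) := by
    intro m
    rw [Zmat, Matrix.of_apply, tsum_mul_left]
  simp_rw [h1]
  rw [← Summable.tsum_finsetSum (fun m _ => (hsum m b).mul_left (w m))]
  convert tsum_zero with t
  have h2 : ∑ m, w m * ((P ^ t) m b - w b)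
      = ∑ m, w m * (P ^ t) m b - (∑ m, w m) * w b := by
    rw [Finset.sum_mul, ← Finset.sum_sub_distrib]
    exact Finset.sum_congr rfl fun m _ => by ring
  rw [h2, pow_stationary hP hst t b, hst.1.2, one_mul, sub_self]

lemma G_eq_Z (hP : IsStochastic P) (herg : IsErgodic P) (hst : IsStationary P w)
    (hrev : IsReversible P w) (hpos : ∀ i, 0 < w i)
    {G : Matrix (Fin d) (Fin d) ℝ}
    (hG1 : (1 - P) * G * (1 - P) = 1 - P)
    (hG2 : G * (1 - P) * G = G)
    (hG3 : G * (1 - P) = (1 - P) * G) : G = Zmat P w := by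
  have hZl := Z_left hP herg hst hrev hpos
  have hZr := Z_right hP herg hst hrev hpos
  have hZ3 : Zmat P w * (1 - P) = (1 - P) * Zmat P w := hZr.trans hZl.symm
  have hZ1 : (1 - P) * Zmat P w * (1 - P) = 1 - P := by
    rw [hZl, Matrix.sub_mul, Matrix.one_mul, Matrix.mul_sub, Matrix.mul_one,
      PiMat_mul_P hP hst]
    abel
  have hZ2 : Zmat P w * (1 - P) * Zmat P w = Zmat P w := by
    rw [hZr, Matrix.sub_mul, Matrix.one_mul, PiMat_mul_Z hP herg hst hrev hpos]
    simp
  exact grpInv_unique hG1 hG2 hG3 hZ1 hZ2 hZ3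

end Chain2

section Chain3

variable {d : ℕ} {P : Matrix (Fin d) (Fin d) ℝ} {w : Fin d → ℝ}

lemma partial_sum_le (hP : IsStochastic P) (j : Fin d) :
    ∀ T : ℕ, ∀ i, ∑ t ∈ Finset.range (T+1), (P ^ t) i j
      ≤ ∑ t ∈ Finset.range (T+1), (P ^ t) j j := by
  intro T
  induction T with
  | zero =>
    intro i
    by_cases h : i = j
    · subst h; exact le_refl _
    · simp [Matrix.one_apply, h]
  | succ T ih =>
    intro i
    by_cases hij : i = j
    · subst hij; exact le_refl _
    have hdecomp : ∀ m : Fin d, ∑ t ∈ Finset.range (T+2), (P ^ t) m j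
        = (∑ t ∈ Finset.range (T+1), ∑ x, P m x * (P ^ t) x j) + (1 : Matrix (Fin d) (Fin d) ℝ) m j := by
      intro m
      rw [Finset.sum_range_succ' (fun t => (P ^ t) m j) (T+1)]
      congr 1
      refine Finset.sum_congr rfl fun t _ => ?_
      rw [pow_succ', Matrix.mul_apply]
    calc ∑ t ∈ Finset.range (T+2), (P ^ t) i j
        = (∑ t ∈ Finset.range (T+1), ∑ x, P i x * (P ^ t) x j) + (1 : Matrix (Fin d) (Fin d) ℝ) i j :=
          hdecomp i
    _ = ∑ x, P i x * ∑ t ∈ Finset.range (T+1), (P ^ t) x j := by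
        rw [Finset.sum_comm, Matrix.one_apply_ne hij, add_zero]
        exact Finset.sum_congr rfl fun x _ => (Finset.mul_sum _ _ _).symm
    _ ≤ ∑ x, P i x * ∑ t ∈ Finset.range (T+1), (P ^ t) j j := by
        refine Finset.sum_le_sum fun x _ => mul_le_mul_of_nonneg_left (ih x) (hP.1 i x)
    _ = ∑ t ∈ Finset.range (T+1), (P ^ t) j j := by
        rw [← Finset.sum_mul, hP.2 i, one_mul]
    _ ≤ ∑ t ∈ Finset.range (T+2), (P ^ t) j j := by
        rw [Finset.sum_range_succ (fun t => (P ^ t) j j) (T+1)]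
        have := pow_nonneg_entry hP (T+1) j j
        linarith
    
lemma Z_summable_diff (hP : IsStochastic P) (herg : IsErgodic P) (hst : IsStationary P w)
    (hrev : IsReversible P w) (hpos : ∀ i, 0 < w i) (i j : Fin d) :
    Summable (fun t : ℕ => (P ^ t) j j - (P ^ t) i j) := by
  have h1 := summable_pow_sub hP herg hst hrev hpos j j
  have h2 := summable_pow_sub hP herg hst hrev hpos i j
  simpa using h1.sub h2

lemma Z_diff_eq (hP : IsStochastic P) (herg : IsErgodic P) (hst : IsStationary P w)
    (hrev : IsReversible P w) (hpos : ∀ i, 0 < w i) (i j : Fin d) :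
    Zmat P w j j - Zmat P w i j = ∑' t : ℕ, ((P ^ t) j j - (P ^ t) i j) := by
  have h1 := summable_pow_sub hP herg hst hrev hpos j j
  have h2 := summable_pow_sub hP herg hst hrev hpos i j
  simp only [Zmat, Matrix.of_apply]
  rw [← Summable.tsum_sub h1 h2]
  congr 1
  ext t
  ring

lemma Z_diff_nonneg (hP : IsStochastic P) (herg : IsErgodic P) (hst : IsStationary P w)
    (hrev : IsReversible P w) (hpos : ∀ i, 0 < w i) (i j : Fin d) :
    0 ≤ Zmat P w j j - Zmat P w i j := by
  rw [Z_diff_eq hP herg hst hrev hpos i j]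
  have hsum := Z_summable_diff hP herg hst hrev hpos i j
  refine ge_of_tendsto hsum.hasSum.tendsto_sum_nat (Filter.Eventually.of_forall fun N => ?_)
  rcases Nat.eq_zero_or_pos N with h | h
  · subst h; simp
  obtain ⟨T, rfl⟩ := Nat.exists_eq_add_of_lt (Nat.lt_of_lt_of_le Nat.zero_lt_one h)
  rw [zero_add]
  have := partial_sum_le hP j T i
  rw [Finset.sum_sub_distrib]
  linarith

lemma Z_row_sum (hP : IsStochastic P) (herg : IsErgodic P) (hst : IsStationary P w)
    (hrev : IsReversible P w) (hpos : ∀ i, 0 < w i) (a : Fin d) :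
    ∑ b, Zmat P w a b = 0 := by
  have hsum := summable_pow_sub hP herg hst hrev hpos
  simp only [Zmat, Matrix.of_apply]
  rw [← Summable.tsum_finsetSum (fun b _ => hsum a b)]
  convert tsum_zero with t
  rw [Finset.sum_sub_distrib, pow_row_sum hP t a, hst.1.2, sub_self]

lemma Z_trace_bound (hP : IsStochastic P) (herg : IsErgodic P) (hst : IsStationary P w)
    (hrev : IsReversible P w) (hpos : ∀ i, 0 < w i) (hd : 0 < d) :
    ∑ b, Zmat P w b b ≤ ((d : ℝ) - 1) * (1 / absSpectralGap P) := by
  classical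
  obtain ⟨hgap_pos, hgap_le, hroot_bound⟩ := gap_facts hP herg
  set gap := absSpectralGap P with hgap_def
  set r : ℝ := 1 - gap with hr_def
  have hr0 : 0 ≤ r := by simp only [hr_def]; linarith
  have hr1 : r < 1 := by simp only [hr_def]; linarith
  set hM := Lgen_isHermitian hrev hpos with hM_def
  obtain ⟨k0, hk0, hk0vec, hk0uniq⟩ := exists_top hP herg hst hrev hpos hd
  set lam := hM.eigenvalues with lam_def
  set v := hM.eigenvectorBasis with v_def
  have heig : ∀ k, k ≠ k0 → |lam k| ≤ r := by
    intro k hk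
    have hne1 : lam k ≠ 1 := fun h => hk (hk0uniq k h)
    have hx : (Lgen w P) *ᵥ ⇑(v k) = lam k • ⇑(v k) := hM.mulVec_eigenvectorBasis k
    have hx0 : ⇑(v k) ≠ 0 := by
      intro h
      exact v.orthonormal.ne_zero k (by ext i; exact congr_fun h i)
    exact hroot_bound _ (eig_isRoot hpos hx0 hx) hne1
  have hsum := summable_pow_sub hP herg hst hrev hpos
  -- pointwise trace identity
  have htr : ∀ t : ℕ, ∑ b, ((P ^ t) b b - w b) = ∑ k ∈ univ.erase k0, lam k ^ t := by
    intro t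
    have h1 : ∀ b, (P ^ t) b b = ((Lgen w P) ^ t) b b := by
      intro b
      rw [Lgen_pow_apply hpos t b b, mul_comm, mul_div_assoc,
        div_self (Real.sqrt_pos.mpr (hpos b)).ne', mul_one]
    calc ∑ b, ((P ^ t) b b - w b) = ∑ b, ((Lgen w P) ^ t) b b - ∑ b, w b := by
          rw [Finset.sum_sub_distrib]
          congr 1
          exact Finset.sum_congr rfl fun b _ => by rw [h1 b]
    _ = (∑ k, lam k ^ t * ∑ b, v k b * v k b) - 1 := by
          rw [hst.1.2]
          congr 1
          calc ∑ b, ((Lgen w P) ^ t) b b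
              = ∑ b, ∑ k, lam k ^ t * v k b * v k b := by
                exact Finset.sum_congr rfl fun b _ => herm_pow_apply hM t b b
          _ = ∑ k, lam k ^ t * ∑ b, v k b * v k b := by
                rw [Finset.sum_comm]
                refine Finset.sum_congr rfl fun k _ => ?_
                rw [Finset.mul_sum]
                exact Finset.sum_congr rfl fun b _ => by ring
    _ = (∑ k, lam k ^ t) - 1 := by
          congr 1
          refine Finset.sum_congr rfl fun k _ => ?_
          have := basis_orthonormality hM k k
          simp at this
          rw [this, mul_one]
    _ = ∑ k ∈ univ.erase k0, lam k ^ t := by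
          rw [← Finset.sum_erase_add _ _ (mem_univ k0), hk0, one_pow]
          ring
  -- summability of each geometric series
  have hgeom : ∀ k, k ∈ univ.erase k0 → Summable (fun t : ℕ => lam k ^ t) := by
    intro k hk
    exact summable_geometric_of_norm_lt_one
      (by rw [Real.norm_eq_abs]; exact lt_of_le_of_lt (heig k (Finset.ne_of_mem_erase hk)) hr1)
  calc ∑ b, Zmat P w b b = ∑' t : ℕ, ∑ b, ((P ^ t) b b - w b) := by
        simp only [Zmat, Matrix.of_apply]
        rw [← Summable.tsum_finsetSum (fun b _ => hsum b b)]
  _ = ∑' t : ℕ, ∑ k ∈ univ.erase k0, lam k ^ t := by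
        congr 1; ext t; exact htr t
  _ = ∑ k ∈ univ.erase k0, ∑' t : ℕ, lam k ^ t := Summable.tsum_finsetSum hgeom
  _ = ∑ k ∈ univ.erase k0, (1 - lam k)⁻¹ := by
        refine Finset.sum_congr rfl fun k hk => ?_
        exact tsum_geometric_of_norm_lt_one
          (by rw [Real.norm_eq_abs]; exact lt_of_le_of_lt (heig k (Finset.ne_of_mem_erase hk)) hr1)
  _ ≤ ∑ k ∈ univ.erase k0, 1 / gap := by
        refine Finset.sum_le_sum fun k hk => ?_
        have h2 := heig k (Finset.ne_of_mem_erase hk)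
        have h3 : gap ≤ 1 - lam k := by
          have := neg_abs_le (lam k)
          simp only [hr_def] at h2
          have := abs_le.mp h2
          linarith [this.2]
        rw [one_div]
        exact inv_anti₀ hgap_pos h3
  _ = ((d : ℝ) - 1) * (1 / gap) := by
        rw [Finset.sum_const, Finset.card_erase_of_mem (mem_univ k0)]
        simp only [Finset.card_univ, Fintype.card_fin, nsmul_eq_mul]
        congr 1
        have : (1:ℕ) ≤ d := hd
        rw [Nat.cast_sub this, Nat.cast_one]

lemma Z_log_bound (hP : IsStochastic P) (herg : IsErgodic P) (hst : IsStationary P w)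
    (hrev : IsReversible P w) (hpos : ∀ i, 0 < w i) (hd : 0 < d) (i j : Fin d) :
    Zmat P w j j - Zmat P w i j
      ≤ (Real.log (2 / Real.sqrt (minEntry w)) + 3) * (1 / absSpectralGap P) := by
  classical
  obtain ⟨hgap_pos, hgap_le, -⟩ := gap_facts hP herg
  set gap := absSpectralGap P with hgap_def
  set r : ℝ := 1 - gap with hr_def
  have hr0 : 0 ≤ r := by simp only [hr_def]; linarith
  have hr1 : r < 1 := by simp only [hr_def]; linarith
  have hgap_r : 1 - r = gap := by simp only [hr_def]; ring
  -- facts about the minimum entry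
  have hinst : Nonempty (Fin d) := ⟨⟨0, hd⟩⟩
  have hmin_pos : 0 < minEntry w := by
    obtain ⟨i0, hi0⟩ := exists_eq_ciInf_of_finite (f := w)
    rw [minEntry, ← hi0]
    exact hpos i0
  have hmin_le : ∀ a, minEntry w ≤ w a := fun a => ciInf_le (Finite.bddBelow_range _) a
  have hw_le_one : ∀ a, w a ≤ 1 := by
    intro a
    have := Finset.single_le_sum (f := w) (fun b _ => (hpos b).le) (mem_univ a)
    rw [hst.1.2] at this
    exact this
  set sm : ℝ := Real.sqrt (minEntry w) with hsm_def
  have hsm_pos : 0 < sm := Real.sqrt_pos.mpr hmin_pos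
  have hsm_le_one : sm ≤ 1 := Real.sqrt_le_one.mpr (le_trans (hmin_le ⟨0, hd⟩) (hw_le_one ⟨0, hd⟩))
  -- termwise bounds
  set g : ℕ → ℝ := fun t => (P ^ t) j j - (P ^ t) i j with hg_def
  have hkey_jj : ∀ t, |(P ^ t) j j - w j| ≤ r ^ t := by
    intro t
    have h := key_decay hP herg hst hrev hpos hd t j j
    rwa [div_self (Real.sqrt_pos.mpr (hpos j)).ne', mul_one] at h
  have hgb1 : ∀ t, g t ≤ w j + r ^ t := by
    intro t
    have h1 := abs_le.mp (hkey_jj t)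
    have h2 := pow_nonneg_entry hP t i j
    simp only [hg_def]
    linarith [h1.2]
  have hgb2 : ∀ t, g t ≤ 2 / sm * r ^ t := by
    intro t
    have h1 := abs_le.mp (hkey_jj t)
    have h2 := abs_le.mp (key_decay hP herg hst hrev hpos hd t i j)
    have h3 : Real.sqrt (w j) / Real.sqrt (w i) ≤ 1 / sm := by
      apply div_le_div₀ (by norm_num) (Real.sqrt_le_one.mpr (hw_le_one j)) hsm_pos
      exact Real.sqrt_le_sqrt (hmin_le i)
    have h4 : (1:ℝ) ≤ 1 / sm := by
      rw [le_div_iff₀ hsm_pos, one_mul]; exact hsm_le_one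
    have h5 : 0 ≤ r ^ t := pow_nonneg hr0 t
    have h6 : r ^ t * (Real.sqrt (w j) / Real.sqrt (w i)) ≤ r ^ t * (1 / sm) :=
      mul_le_mul_of_nonneg_left h3 h5
    simp only [hg_def]
    have h7 : r ^ t ≤ r ^ t * (1 / sm) := by nlinarith
    rw [← hgap_def, ← hr_def] at h2
    have hstep : (P ^ t) j j - (P ^ t) i j
        ≤ r ^ t + r ^ t * (Real.sqrt (w j) / Real.sqrt (w i)) := by
      linarith [h1.2, h2.1]
    calc (P ^ t) j j - (P ^ t) i j
        ≤ r ^ t * (1 / sm) + r ^ t * (1 / sm) := by linarith [h6, h7, hstep]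
    _ = 2 / sm * r ^ t := by ring
  -- the threshold
  set L : ℝ := Real.log (2 / sm) with hL_def
  have hL_pos : 0 < L := Real.log_pos (by rw [lt_div_iff₀ hsm_pos, one_mul]; linarith)
  set T : ℕ := ⌈L / gap⌉₊ with hT_def
  have hT_ge : L / gap ≤ (T : ℝ) := Nat.le_ceil _
  have hT_le : (T : ℝ) ≤ L / gap + 1 :=
    (Nat.ceil_lt_add_one (div_nonneg hL_pos.le hgap_pos.le)).le
  -- summability
  have hsumg : Summable g := Z_summable_diff hP herg hst hrev hpos i j
  have hsum_geo : Summable (fun t : ℕ => r ^ t) := summable_geometric_of_lt_one hr0 hr1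
  have hgeo_tsum : ∑' t : ℕ, r ^ t = 1 / gap := by
    rw [tsum_geometric_of_lt_one hr0 hr1, hgap_r, one_div]
  -- split the sum
  have hsplit : ∑' t, g t = ∑ t ∈ Finset.range T, g t + ∑' t, g (t + T) :=
    (Summable.sum_add_tsum_nat_add T hsumg).symm
  -- part 1
  have hpart1 : ∑ t ∈ Finset.range T, g t ≤ (T : ℝ) + 1 / gap := by
    calc ∑ t ∈ Finset.range T, g t ≤ ∑ t ∈ Finset.range T, (w j + r ^ t) :=
          Finset.sum_le_sum fun t _ => hgb1 t
    _ = (T : ℝ) * w j + ∑ t ∈ Finset.range T, r ^ t := by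
          rw [Finset.sum_add_distrib, Finset.sum_const, Finset.card_range, nsmul_eq_mul]
    _ ≤ (T : ℝ) * 1 + 1 / gap := by
          have h1 : ∑ t ∈ Finset.range T, r ^ t ≤ ∑' t : ℕ, r ^ t :=
            Summable.sum_le_tsum _ (fun t _ => pow_nonneg hr0 t) hsum_geo
          rw [hgeo_tsum] at h1
          have h2 : (T:ℝ) * w j ≤ (T:ℝ) * 1 :=
            mul_le_mul_of_nonneg_left (hw_le_one j) (Nat.cast_nonneg T)
          linarith
    _ = (T : ℝ) + 1 / gap := by ring
  -- part 2
  have hrT : r ^ T ≤ sm / 2 := by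
    have h1 : r ≤ Real.exp (-gap) := by
      have := Real.add_one_le_exp (-gap)
      simp only [hr_def]
      linarith
    have h2 : r ^ T ≤ Real.exp (-gap) ^ T := pow_le_pow_left₀ hr0 h1 T
    have h3 : Real.exp (-gap) ^ T = Real.exp ((T : ℝ) * (-gap)) := by
      rw [← Real.exp_nat_mul]
    have h4 : (T : ℝ) * (-gap) ≤ -L := by
      have : L ≤ (T : ℝ) * gap := by
        rw [div_le_iff₀ hgap_pos] at hT_ge
        linarith
      linarith
    have h5 : Real.exp ((T : ℝ) * (-gap)) ≤ Real.exp (-L) := Real.exp_le_exp.mpr h4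
    have h6 : Real.exp (-L) = sm / 2 := by
      rw [Real.exp_neg, hL_def, Real.exp_log (div_pos two_pos hsm_pos), inv_div]
    linarith
  have hpart2 : ∑' t, g (t + T) ≤ 1 / gap := by
    have hshift_sum : Summable (fun t => g (t + T)) := (summable_nat_add_iff T).mpr hsumg
    have hrhs_sum : Summable (fun t : ℕ => 2 / sm * r ^ (t + T)) := by
      have : Summable (fun t : ℕ => (2 / sm * r ^ T) * r ^ t) := hsum_geo.mul_left _
      refine this.congr fun t => ?_
      rw [pow_add]; ring
    have h1 : ∑' t, g (t + T) ≤ ∑' t : ℕ, 2 / sm * r ^ (t + T) :=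
      Summable.tsum_le_tsum (fun t => hgb2 (t + T)) hshift_sum hrhs_sum
    have h2 : ∑' t : ℕ, 2 / sm * r ^ (t + T) = (2 / sm * r ^ T) * (1 / gap) := by
      rw [← hgeo_tsum, ← tsum_mul_left]
      congr 1
      ext t
      rw [pow_add]; ring
    have h3 : 2 / sm * r ^ T ≤ 1 := by
      rw [div_mul_eq_mul_div, div_le_one hsm_pos]
      nlinarith [hrT]
    have h4 : (0:ℝ) ≤ 1 / gap := by positivity
    calc ∑' t, g (t + T) ≤ (2 / sm * r ^ T) * (1 / gap) := by rw [← h2]; exact h1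
    _ ≤ 1 * (1 / gap) := mul_le_mul_of_nonneg_right h3 h4
    _ = 1 / gap := one_mul _
  -- combine
  have hone_le : (1:ℝ) ≤ 1 / gap := by
    rw [le_div_iff₀ hgap_pos, one_mul]; exact hgap_le
  have htotal : ∑' t, g t ≤ (L + 3) / gap := by
    rw [hsplit]
    have : (T : ℝ) ≤ L / gap + 1 / gap := by
      calc (T:ℝ) ≤ L / gap + 1 := hT_le
      _ ≤ L / gap + 1 / gap := by linarith
    calc ∑ t ∈ Finset.range T, g t + ∑' t, g (t + T)
        ≤ ((T : ℝ) + 1 / gap) + 1 / gap := add_le_add hpart1 hpart2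
    _ ≤ (L / gap + 1 / gap + 1 / gap) + 1 / gap := by linarith
    _ = (L + 3) / gap := by field_simp; ring
  rw [Z_diff_eq hP herg hst hrev hpos i j]
  calc ∑' t, g t ≤ (L + 3) / gap := htotal
  _ = (L + 3) * (1 / gap) := by ring

end Chain3

/-- bound on the condition number κ via the spectral gap. -/
theorem statement16 (d : ℕ) (P : Matrix (Fin d) (Fin d) ℝ) (w : Fin d → ℝ)
    (hP : IsStochastic P) (herg : IsErgodic P) (hst : IsStationary P w)
    (hrev : IsReversible P w) (hpos : ∀ i, 0 < w i)
    (G : Matrix (Fin d) (Fin d) ℝ)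
    (hG1 : (1 - P) * G * (1 - P) = 1 - P)
    (hG2 : G * (1 - P) * G = G)
    (hG3 : G * (1 - P) = (1 - P) * G) :
    (1 / 2) * ⨆ j, (G j j - ⨅ i, G i j) ≤
      (1 / absSpectralGap P) * min (d : ℝ) (8 + Real.log (4 / minEntry w)) := by
  classical
  rcases Nat.eq_zero_or_pos d with hd0 | hd
  · exfalso
    have h := hst.1.2
    subst hd0
    simp at h
  have hinst : Nonempty (Fin d) := ⟨⟨0, hd⟩⟩
  obtain ⟨hgap_pos, hgap_le, -⟩ := gap_facts hP herg
  have hGZ : G = Zmat P w := G_eq_Z hP herg hst hrev hpos hG1 hG2 hG3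
  set R : ℝ := (1 / absSpectralGap P) * min (d : ℝ) (8 + Real.log (4 / minEntry w)) with hR
  have hgap_inv_pos : 0 < 1 / absSpectralGap P := by positivity
  have hmin_pos : 0 < minEntry w := by
    obtain ⟨i0, hi0⟩ := exists_eq_ciInf_of_finite (f := w)
    rw [minEntry, ← hi0]
    exact hpos i0
  have hw_le_one : ∀ a, w a ≤ 1 := by
    intro a
    have h := Finset.single_le_sum (f := w) (fun b _ => (hpos b).le) (mem_univ a)
    rw [hst.1.2] at h
    exact h
  have hmin_le_one : minEntry w ≤ 1 := by
    have h1 : minEntry w ≤ w ⟨0, hd⟩ := ciInf_le (Finite.bddBelow_range _) _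
    exact h1.trans (hw_le_one _)
  have hdiff : ∀ i j : Fin d, Zmat P w j j - Zmat P w i j ≤ 2 * R := by
    intro i j
    rcases min_cases (d : ℝ) (8 + Real.log (4 / minEntry w)) with ⟨hmeq, -⟩ | ⟨hmeq, -⟩
    · -- min is d : use the trace bound
      have h1 : Zmat P w j j - Zmat P w i j ≤ ∑ b, (Zmat P w b b - Zmat P w i b) :=
        Finset.single_le_sum (f := fun b => Zmat P w b b - Zmat P w i b)
          (fun b _ => Z_diff_nonneg hP herg hst hrev hpos i b) (mem_univ j)
      have h2 : ∑ b, (Zmat P w b b - Zmat P w i b) = ∑ b, Zmat P w b b := by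
        rw [Finset.sum_sub_distrib, Z_row_sum hP herg hst hrev hpos i, sub_zero]
      have h3 := Z_trace_bound hP herg hst hrev hpos hd
      have h4 : ((d:ℝ) - 1) * (1 / absSpectralGap P) ≤ 2 * R := by
        rw [hR, hmeq]
        have hd1 : (1:ℝ) ≤ (d:ℝ) := by exact_mod_cast hd
        nlinarith [hgap_inv_pos]
      linarith
    · -- min is the log term : use the log bound
      have h1 := Z_log_bound hP herg hst hrev hpos hd i j
      have h2 : Real.log (2 / Real.sqrt (minEntry w)) + 3
          ≤ 2 * (8 + Real.log (4 / minEntry w)) := by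
        have e1 : Real.log (2 / Real.sqrt (minEntry w))
            = Real.log 2 - (1/2) * Real.log (minEntry w) := by
          rw [Real.log_div (by norm_num) (Real.sqrt_pos.mpr hmin_pos).ne',
            Real.log_sqrt hmin_pos.le]
          ring
        have e2 : Real.log (4 / minEntry w) = Real.log 4 - Real.log (minEntry w) := by
          rw [Real.log_div (by norm_num) hmin_pos.ne']
        have e3 : Real.log (minEntry w) ≤ 0 := Real.log_nonpos hmin_pos.le hmin_le_one
        have e4 : Real.log 2 ≤ 1 := by
          have := Real.log_le_sub_one_of_pos (by norm_num : (0:ℝ) < 2)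
          linarith
        have e5 : (0:ℝ) ≤ Real.log 4 := Real.log_nonneg (by norm_num)
        rw [e1, e2]
        linarith
      have h3 : (Real.log (2 / Real.sqrt (minEntry w)) + 3) * (1 / absSpectralGap P)
          ≤ (2 * (8 + Real.log (4 / minEntry w))) * (1 / absSpectralGap P) :=
        mul_le_mul_of_nonneg_right h2 hgap_inv_pos.le
      have h4 : (2 * (8 + Real.log (4 / minEntry w))) * (1 / absSpectralGap P) = 2 * R := by
        rw [hR, hmeq]
        ring
      linarith
  have hsup : (⨆ j, (G j j - ⨅ i, G i j)) ≤ 2 * R := by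
    refine ciSup_le fun j => ?_
    obtain ⟨i0, hi0⟩ := exists_eq_ciInf_of_finite (f := fun i => G i j)
    rw [← hi0, hGZ]
    exact hdiff i0 j
  calc (1 / 2 : ℝ) * ⨆ j, (G j j - ⨅ i, G i j) ≤ (1/2) * (2 * R) := by
        refine mul_le_mul_of_nonneg_left hsup (by norm_num)
  _ = R := by ring

end MCEst
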